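/- For every ps-context Γ (a context such that Γ ⊢_ps is derivable), the associated globular set V(Γ) of variables is ◁-linear: for all distinct variables a, b of Γ, either a ◁ b or b ◁ a, and no variable x satisfies x ◁ x. -/

import Mathlib

namespace CaTT

mutual
  /-- Terms of the theory `CaTT`: variables and the two coherence constructors
  `coh^op_{Γ,A}[γ]` and `coh_{Γ,A}[γ]`. -/
  inductive Tm : Type
    | var : ℕ → Tm
    | cohop : List (ℕ × Ty) → Ty → List (ℕ × Tm) → Tm
    | coh : List (ℕ × Ty) → Ty → List (ℕ × Tm) → Tm
  /-- Types of the theory `CaTT`: `Obj` and `Hom A t u`. -/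
  inductive Ty : Type
    | obj : Ty
    | hom : Ty → Tm → Tm → Ty
end

/-- Contexts (most recently declared variable first). -/
abbrev Ctx := List (ℕ × Ty)

/-- Substitutions (most recent assignment first). -/
abbrev Sub := List (ℕ × Tm)

/-- Action of a substitution on a variable. -/
def lookupSub (x : ℕ) : Sub → Tm
  | [] => .var x
  | (y, u) :: γ => if x = y then u else lookupSub x γ

mutual
  /-- Action of a substitution on a term. -/
  def Tm.sub : Tm → Sub → Tm
    | .var x, γ => lookupSub x γ
    | .cohop Γ A δ, γ => .cohop Γ A (Sub.comp δ γ)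
    | .coh Γ A δ, γ => .coh Γ A (Sub.comp δ γ)
  /-- Composition of substitutions. -/
  def Sub.comp : Sub → Sub → Sub
    | [], _ => []
    | (x, t) :: δ, γ => (x, Tm.sub t γ) :: Sub.comp δ γ
end

/-- Action of a substitution on a type. -/
def Ty.sub : Ty → Sub → Ty
  | .obj, _ => .obj
  | .hom A t u, γ => .hom (A.sub γ) (t.sub γ) (u.sub γ)

/-- The identity substitution of a context. -/
def idSub (Γ : Ctx) : Sub := Γ.map (fun p => (p.1, Tm.var p.1))

mutual
  /-- Free variables of a term. -/
  def Tm.vars : Tm → Set ℕ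
    | .var x => {x}
    | .cohop _ _ γ => Sub.vars γ
    | .coh _ _ γ => Sub.vars γ
  /-- Free variables of a substitution. -/
  def Sub.vars : Sub → Set ℕ
    | [] => ∅
    | (_, t) :: γ => Tm.vars t ∪ Sub.vars γ
end

/-- Free variables of a type. -/
def Ty.vars : Ty → Set ℕ
  | .obj => ∅
  | .hom A t u => A.vars ∪ t.vars ∪ u.vars

/-- The set of variables declared in a context. -/
def Ctx.domvars (Γ : Ctx) : Set ℕ := {x | ∃ A, (x, A) ∈ Γ}

/-- The dimension of a type, shifted so that `dimN Obj = 0`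
(the paper's dimension is `dimN - 1`). -/
def Ty.dimN : Ty → ℕ
  | .obj => 0
  | .hom A _ _ => A.dimN + 1

/-- The dimension of a context (the maximum of `dimN` of its types). -/
def ctxDim (Γ : Ctx) : ℕ := (Γ.map (fun p => p.2.dimN)).foldr max 0

/-- The `i`-source `∂⁻ᵢ` of a (ps-)context. -/
def bdm (i : ℕ) : Ctx → Ctx
  | f :: y :: Γ => if i ≤ y.2.dimN then bdm i Γ else f :: y :: bdm i Γ
  | Γ => Γ

/-- The `i`-target `∂⁺ᵢ` of a (ps-)context. -/
def bdp (i : ℕ) : Ctx → Ctx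
  | f :: y :: Γ =>
    if i + 1 ≤ y.2.dimN then bdp i Γ
    else if y.2.dimN = i then y :: (bdp i Γ).tail
    else f :: y :: bdp i Γ
  | Γ => Γ

/-- The source `∂⁻Γ` of a ps-context. -/
def srcCtx (Γ : Ctx) : Ctx := bdm (ctxDim Γ - 1) Γ

/-- The target `∂⁺Γ` of a ps-context. -/
def tgtCtx (Γ : Ctx) : Ctx := bdp (ctxDim Γ - 1) Γ

/-- The judgment `Γ ⊢ps x : A` recognizing ps-contexts, with dangling variable `x`. -/
inductive PsVar : Ctx → ℕ → Ty → Prop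
  | pss (x : ℕ) : PsVar [(x, .obj)] x .obj
  | pse {Γ : Ctx} {x : ℕ} {A : Ty} (y f : ℕ) :
      PsVar Γ x A → y ∉ Ctx.domvars Γ → f ∉ Ctx.domvars Γ → y ≠ f →
      PsVar ((f, .hom A (.var x) (.var y)) :: (y, A) :: Γ) f (.hom A (.var x) (.var y))
  | psd {Γ : Ctx} {f : ℕ} {A : Ty} {x y : ℕ} :
      PsVar Γ f (.hom A (.var x) (.var y)) → PsVar Γ y A

/-- The judgment `Γ ⊢ps`: `Γ` is a ps-context. -/
def PsDer (Γ : Ctx) : Prop := ∃ x, PsVar Γ x .obj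

mutual
  /-- Derivability of contexts in `CaTT`. -/
  inductive CtxDer : Ctx → Prop
    | nil : CtxDer []
    | ext {Γ : Ctx} {A : Ty} {x : ℕ} :
        CtxDer Γ → TyDer Γ A → x ∉ Ctx.domvars Γ → CtxDer ((x, A) :: Γ)
  /-- Derivability of types in `CaTT`. -/
  inductive TyDer : Ctx → Ty → Prop
    | obj {Γ : Ctx} : CtxDer Γ → TyDer Γ .obj
    | hom {Γ : Ctx} {A : Ty} {t u : Tm} :
        TyDer Γ A → TmDer Γ t A → TmDer Γ u A → TyDer Γ (.hom A t u)
  /-- Derivability of terms in `CaTT`, with the rules (var), (op) and (coh). -/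
  inductive TmDer : Ctx → Tm → Ty → Prop
    | var {Γ : Ctx} {x : ℕ} {A : Ty} : CtxDer Γ → (x, A) ∈ Γ → TmDer Γ (.var x) A
    | op {Γ : Ctx} {A : Ty} {t u : Tm} {Δ : Ctx} {γ : Sub} :
        PsDer Γ →
        TmDer (srcCtx Γ) t A → TmDer (tgtCtx Γ) u A →
        Tm.vars t ∪ Ty.vars A = Ctx.domvars (srcCtx Γ) →
        Tm.vars u ∪ Ty.vars A = Ctx.domvars (tgtCtx Γ) →
        SubDer Δ γ Γ →
        TmDer Δ (.cohop Γ (.hom A t u) γ) ((Ty.hom A t u).sub γ)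
    | coh {Γ : Ctx} {A : Ty} {t u : Tm} {Δ : Ctx} {γ : Sub} :
        PsDer Γ →
        TmDer Γ t A → TmDer Γ u A →
        Tm.vars t ∪ Ty.vars A = Ctx.domvars Γ →
        Tm.vars u ∪ Ty.vars A = Ctx.domvars Γ →
        SubDer Δ γ Γ →
        TmDer Δ (.coh Γ (.hom A t u) γ) ((Ty.hom A t u).sub γ)
  /-- Derivability of substitutions in `CaTT`. -/
  inductive SubDer : Ctx → Sub → Ctx → Prop
    | nil {Δ : Ctx} : CtxDer Δ → SubDer Δ [] []
    | cons {Δ : Ctx} {γ : Sub} {Γ : Ctx} {x : ℕ} {A : Ty} {t : Tm} :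
        SubDer Δ γ Γ → TyDer Γ A → x ∉ Ctx.domvars Γ → TmDer Δ t (A.sub γ) →
        SubDer Δ ((x, t) :: γ) ((x, A) :: Γ)
end

/-- The types `U_n` of the disk and sphere contexts. -/
def U : ℕ → Ty
  | 0 => .obj
  | n + 1 => .hom (U n) (.var (2 * n)) (.var (2 * n + 1))

/-- The sphere contexts; `SphC n` is the context `S^{n-1}` of the paper. -/
def SphC : ℕ → Ctx
  | 0 => []
  | n + 1 => (2 * n + 1, U n) :: (2 * n, U n) :: SphC n

/-- The disk contexts `D^n`. -/
def DiskC (n : ℕ) : Ctx := (2 * n, U n) :: SphC n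

/-- The characteristic substitution `χ_A : Γ → S^{dim A}` of a type. -/
def chiTy : Ty → Sub
  | .obj => []
  | .hom B t u => (2 * B.dimN + 1, u) :: (2 * B.dimN, t) :: chiTy B

/-- The characteristic substitution `χ_t : Γ → D^{dim A}` of a term `t` of type `A`. -/
def chiTm (t : Tm) (A : Ty) : Sub := (2 * A.dimN, t) :: chiTy A

end CaTT

namespace CaTT

/-- One step of the relation `◁` on the variables of a context: `x ◁ f` and `f ◁ y`
whenever `f : Hom A x y` is declared in `Γ`. -/
def TriStep (Γ : Ctx) (a b : ℕ) : Prop :=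
  ∃ (f : ℕ) (A : Ty) (t u : Tm), (f, Ty.hom A t u) ∈ Γ ∧
    ((t = .var a ∧ b = f) ∨ (a = f ∧ u = .var b))

/-- The relation `◁` on the variables of a context: transitive closure of
`s(x) ◁ x ◁ t(x)`. -/
def Tri (Γ : Ctx) : ℕ → ℕ → Prop := Relation.TransGen (TriStep Γ)

end CaTT

/-!
List the variables of a ps-context in the order in which its derivation creates them: (pse)
applied to `Γ ⊢ps x : A` inserts the new `f` and `y` directly after `x`. This keeps the dangling
variable followed by its iterated targets, so `y` lands right before `t(y)`. In the resulting
duplicate-free list every step `s(g) ◁ g ◁ t(g)` points forward, which makes `◁` irreflexive,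
and consecutive variables are related by `◁`, which makes any two distinct variables comparable.
-/

open scoped List

theorem List.Nodup.pair_sublist_trans {α : Type*} {L : List α} (hL : L.Nodup) {a b c : α}
    (hab : [a, b] <+ L) (hbc : [b, c] <+ L) : [a, c] <+ L := by
  induction L with
  | nil => simp at hab
  | cons x L ih =>
    rw [List.nodup_cons] at hL
    rw [List.sublist_cons_iff] at hab hbc ⊢
    rcases hab with hab | ⟨_, ⟨rfl, rfl⟩, hb⟩
    · rcases hbc with hbc | ⟨_, ⟨rfl, rfl⟩, -⟩
      · exact .inl (ih hL.2 hab hbc)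
      · exact absurd (hab.subset (by simp)) hL.1
    · rcases hbc with hbc | ⟨_, ⟨rfl, rfl⟩, hc⟩
      · exact .inr ⟨[c], rfl, by simpa using hbc.subset (by simp : c ∈ [b, c])⟩
      · exact .inr ⟨_, rfl, hc⟩

namespace CaTT

def Ty.targets : Ty → List ℕ
  | .obj => []
  | .hom B _ (.var q) => q :: B.targets
  | .hom _ _ _ => []

theorem Ctx.mem_domvars_cons {x w : ℕ} {A : Ty} {Γ : Ctx} :
    w ∈ Ctx.domvars ((x, A) :: Γ) ↔ w = x ∨ w ∈ Ctx.domvars Γ := by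
  simp [Ctx.domvars, exists_or]

theorem TriStep.mono {Γ Γ' : Ctx} (h : Γ ⊆ Γ') {a b : ℕ} : TriStep Γ a b → TriStep Γ' a b :=
  fun ⟨g, A, t, u, hg, hab⟩ => ⟨g, A, t, u, h hg, hab⟩

theorem triStep_cons_iff {g a b : ℕ} {C : Ty} {Γ : Ctx} :
    TriStep ((g, C) :: Γ) a b ↔
      (∃ A t u, C = .hom A t u ∧ ((t = .var a ∧ b = g) ∨ (a = g ∧ u = .var b))) ∨
        TriStep Γ a b := by
  constructor
  · rintro ⟨f, A, t, u, hf, hab⟩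
    rcases List.mem_cons.mp hf with h | h
    · obtain ⟨rfl, rfl⟩ := Prod.mk.inj h
      exact .inl ⟨A, t, u, rfl, hab⟩
    · exact .inr ⟨f, A, t, u, h, hab⟩
  · rintro (⟨A, t, u, rfl, hab⟩ | h)
    · exact ⟨g, A, t, u, List.mem_cons_self, hab⟩
    · exact h.mono (List.subset_cons_self _ _)

theorem triStep_of_mem_head?_targets {Γ : Ctx} {y q : ℕ} {A : Ty} (hy : (y, A) ∈ Γ)
    (hq : q ∈ A.targets.head?) : TriStep Γ y q := by
  match A, hq with
  | .hom B t (.var q), rfl => exact ⟨y, B, t, .var q, hy, .inr ⟨rfl, rfl⟩⟩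

structure IsLinearListing (Γ : Ctx) (L : List ℕ) : Prop where
  nodup : L.Nodup
  mem_iff : ∀ w, w ∈ L ↔ w ∈ Γ.domvars
  sublist_of_triStep : ∀ {a b}, TriStep Γ a b → [a, b] <+ L
  isChain : L.IsChain (TriStep Γ)

namespace IsLinearListing

variable {Γ : Ctx} {L : List ℕ}

theorem sublist_of_tri (hL : IsLinearListing Γ L) {a b : ℕ} (h : Tri Γ a b) : [a, b] <+ L := by
  induction h with
  | single h => exact hL.sublist_of_triStep h
  | tail _ h ih => exact hL.nodup.pair_sublist_trans ih (hL.sublist_of_triStep h)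

theorem tri_irrefl (hL : IsLinearListing Γ L) (x : ℕ) : ¬ Tri Γ x x :=
  fun h => List.nodup_iff_sublist.mp hL.nodup x (hL.sublist_of_tri h)

theorem tri_total (hL : IsLinearListing Γ L) {a b : ℕ} (ha : a ∈ Γ.domvars)
    (hb : b ∈ Γ.domvars) (hab : a ≠ b) : Tri Γ a b ∨ Tri Γ b a := by
  have hpw : L.Pairwise (Relation.TransGen (TriStep Γ)) :=
    (hL.isChain.imp fun _ _ => .single).pairwise
  have : Std.Symm (fun a b => Tri Γ a b ∨ Tri Γ b a) := ⟨fun _ _ => Or.symm⟩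
  exact (hpw.imp (S := fun a b => Tri Γ a b ∨ Tri Γ b a) .inl).forall
    ((hL.mem_iff a).2 ha) ((hL.mem_iff b).2 hb) hab

theorem pse {L₁ : List ℕ} {x y f : ℕ} {A : Ty}
    (hL : IsLinearListing Γ (L₁ ++ x :: A.targets)) (hx : (x, A) ∈ Γ)
    (hy : y ∉ Γ.domvars) (hf : f ∉ Γ.domvars) (hyf : y ≠ f) :
    IsLinearListing ((f, .hom A (.var x) (.var y)) :: (y, A) :: Γ)
      (L₁ ++ x :: f :: y :: A.targets) := by
  have hsub : L₁ ++ x :: A.targets <+ L₁ ++ x :: f :: y :: A.targets := by simp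
  have hperm : L₁ ++ x :: f :: y :: A.targets ~ f :: y :: (L₁ ++ x :: A.targets) := by
    grind [List.perm_middle]
  have hnodup : (L₁ ++ x :: f :: y :: A.targets).Nodup := by
    refine hperm.nodup_iff.mpr (List.nodup_cons.mpr ⟨?_, List.nodup_cons.mpr ⟨?_, hL.nodup⟩⟩)
    · simp [hyf.symm, hL.mem_iff, hf]
    · simp [hL.mem_iff, hy]
  have hΓ : Γ ⊆ (f, .hom A (.var x) (.var y)) :: (y, A) :: Γ := by simp
  refine ⟨hnodup, fun w => ?_, fun {a b} h => ?_, ?_⟩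
  · simp [hperm.mem_iff, hL.mem_iff, Ctx.mem_domvars_cons]
  · rcases triStep_cons_iff.mp h with ⟨_, _, _, heq, hab⟩ | h
    · obtain ⟨rfl, rfl, rfl⟩ := Ty.hom.inj heq
      rcases hab with ⟨⟨⟩, rfl⟩ | ⟨rfl, ⟨⟩⟩ <;> simp
    rcases triStep_cons_iff.mp h with ⟨D, t, u, rfl, hab⟩ | h
    · rcases hab with ⟨rfl, rfl⟩ | ⟨rfl, rfl⟩
      · have hax : TriStep Γ a x := ⟨x, D, .var a, u, hx, .inl ⟨rfl, rfl⟩⟩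
        exact hnodup.pair_sublist_trans ((hL.sublist_of_triStep hax).trans hsub) (by simp)
      · exact List.Sublist.trans (by simp [Ty.targets]) (List.sublist_append_right L₁ _)
    · exact (hL.sublist_of_triStep h).trans hsub
  · have hchain := hL.isChain
    rw [List.isChain_split] at hchain ⊢
    refine ⟨hchain.1.imp fun _ _ => TriStep.mono hΓ, ?_⟩
    simp only [List.isChain_cons_cons]
    refine ⟨⟨f, A, .var x, .var y, by simp, .inl ⟨rfl, rfl⟩⟩,
      ⟨f, A, .var x, .var y, by simp, .inr ⟨rfl, rfl⟩⟩, List.isChain_cons.mpr ⟨?_, ?_⟩⟩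
    · exact fun q hq => triStep_of_mem_head?_targets (by simp) hq
    · exact hchain.2.tail.imp fun _ _ => TriStep.mono hΓ

end IsLinearListing

def TargetClosed (Γ : Ctx) : Prop :=
  ∀ {w q : ℕ} {B : Ty} {t : Tm}, (w, Ty.hom B t (.var q)) ∈ Γ → (q, B) ∈ Γ

theorem PsVar.targetClosed_and_mem {Γ : Ctx} {z : ℕ} {C : Ty} (h : PsVar Γ z C) :
    TargetClosed Γ ∧ (z, C) ∈ Γ := by
  induction h with
  | pss x => exact ⟨fun hw => by simp at hw, List.mem_cons_self⟩
  | pse y f _ _ _ _ ih =>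
    obtain ⟨hcl, hx⟩ := ih
    refine ⟨fun hw => ?_, List.mem_cons_self⟩
    rcases List.mem_cons.mp hw with hw | hw
    · obtain ⟨-, rfl, -, ⟨⟩⟩ := by simpa using hw
      simp
    rcases List.mem_cons.mp hw with hw | hw
    · obtain ⟨rfl, rfl⟩ := Prod.mk.inj hw
      exact .tail _ (.tail _ (hcl hx))
    · exact .tail _ (.tail _ (hcl hw))
  | psd _ ih => exact ⟨ih.1, ih.1 ih.2⟩

theorem PsVar.exists_isLinearListing {Γ : Ctx} {z : ℕ} {C : Ty} (h : PsVar Γ z C) :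
    ∃ L₁, IsLinearListing Γ (L₁ ++ z :: C.targets) := by
  induction h with
  | pss x =>
    refine ⟨[], by simp [Ty.targets], fun w => by simp [Ty.targets, Ctx.domvars], fun h => ?_,
      by simp [Ty.targets]⟩
    obtain ⟨_, _, _, _, hmem, -⟩ := h
    simp at hmem
  | pse y f hx hy hf hyf ih =>
    obtain ⟨L₁, hL⟩ := ih
    exact ⟨L₁ ++ [_], by simpa [Ty.targets] using hL.pse hx.targetClosed_and_mem.2 hy hf hyf⟩
  | psd _ ih =>
    obtain ⟨L₁, hL⟩ := ih
    exact ⟨L₁ ++ [_], by simpa [Ty.targets] using hL⟩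

end CaTT

open CaTT in
/-- For every ps-context `Γ`, the globular set of variables of `Γ` is `◁`-linear:
any two distinct variables are comparable for `◁` and no variable satisfies `x ◁ x`. -/
theorem ps_context_is_linear (Γ : Ctx) (hΓ : PsDer Γ) :
    (∀ a b : ℕ, a ∈ Ctx.domvars Γ → b ∈ Ctx.domvars Γ → a ≠ b → Tri Γ a b ∨ Tri Γ b a) ∧
    (∀ x : ℕ, ¬ Tri Γ x x) := by
  obtain ⟨x, hx⟩ := hΓ
  obtain ⟨L₁, hL⟩ := hx.exists_isLinearListing
  exact ⟨fun a b => hL.tri_total, hL.tri_irrefl⟩
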